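/- arXiv:2311.10916 — 3 statements merged into one kernel-verified Lean document; each statement's English description precedes it below -/
import Mathlib

section
/- For every set 𝔘 of diagonals of the repetitive polygon Π^p, the set ^⊥𝔘 is a Ptolemy diagram. -/
/-- A potential diagonal of the repetitive polygon `Π^p`: a triple `(i, j, k)`
with `i, j : ℤ` and region index `k : ZMod p`. -/
abbrev Diag (p : ℕ) := ℤ × ℤ × ZMod p

/-- `(i,j,k)` is a diagonal of the repetitive polygon `Π^p`, where `N = n + 3`:
`1 ≤ i < j ≤ N`, `j - i ≥ 2` and `(i,j) ≠ (1,N)`. -/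
def IsDiagonal (n p : ℕ) (d : Diag p) : Prop :=
  1 ≤ d.1 ∧ d.1 < d.2.1 ∧ d.2.1 ≤ (n : ℤ) + 3 ∧ 2 ≤ d.2.1 - d.1 ∧
    ¬(d.1 = 1 ∧ d.2.1 = (n : ℤ) + 3)

/-- Two diagonals `X = (i,j,ℓ)` and `Y = (i',j',ℓ')` of `Π^p` cross. -/
def Crosses (p : ℕ) (X Y : Diag p) : Prop :=
  (X.2.2 = Y.2.2 ∧
    ((X.1 < Y.1 ∧ Y.1 < X.2.1 ∧ X.2.1 < Y.2.1) ∨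
     (Y.1 < X.1 ∧ X.1 < Y.2.1 ∧ Y.2.1 < X.2.1))) ∨
  (Y.2.2 = X.2.2 + 1 ∧ Y.1 < X.1 ∧ X.1 < Y.2.1 ∧ Y.2.1 < X.2.1) ∨
  (X.2.2 = Y.2.2 + 1 ∧ X.1 < Y.1 ∧ Y.1 < X.2.1 ∧ X.2.1 < Y.2.1)

/-- A set `U` of diagonals of `Π^p` is a Ptolemy diagram: conditions (Pt1), (Pt2), (Pt3)
for every pair of crossing diagonals `X = (i,j,ℓ)`, `Y = (i',j',ℓ')` in `U`. -/
def IsPtolemy (n p : ℕ) (U : Set (Diag p)) : Prop :=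
  ∀ X ∈ U, ∀ Y ∈ U, Crosses p X Y →
    ((X.2.2 = Y.2.2 ∧
        ((X.1 < Y.1 ∧ Y.1 < X.2.1 ∧ X.2.1 < Y.2.1) ∨
         (Y.1 < X.1 ∧ X.1 < Y.2.1 ∧ Y.2.1 < X.2.1))) →
      (IsDiagonal n p (Y.1, X.2.1, X.2.2) → (Y.1, X.2.1, X.2.2) ∈ U) ∧
      (IsDiagonal n p (X.1, Y.2.1, X.2.2) → (X.1, Y.2.1, X.2.2) ∈ U)) ∧
    ((Y.2.2 = X.2.2 + 1 ∧ Y.1 < X.1 ∧ X.1 < Y.2.1 ∧ Y.2.1 < X.2.1) →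
      (IsDiagonal n p (Y.1, X.1, Y.2.2) → (Y.1, X.1, Y.2.2) ∈ U) ∧
      (IsDiagonal n p (Y.2.1, X.2.1, X.2.2) → (Y.2.1, X.2.1, X.2.2) ∈ U)) ∧
    ((X.2.2 = Y.2.2 + 1 ∧ X.1 < Y.1 ∧ Y.1 < X.2.1 ∧ X.2.1 < Y.2.1) →
      (IsDiagonal n p (X.1, Y.1, X.2.2) → (X.1, Y.1, X.2.2) ∈ U) ∧
      (IsDiagonal n p (X.2.1, Y.2.1, Y.2.2) → (X.2.1, Y.2.1, Y.2.2) ∈ U))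

/-- The set `𝔘^⊥`: diagonals `u = (i',j',ℓ')` such that every `v = (i,j,ℓ) ∈ 𝔘` crossing `u`
satisfies `(ℓ = ℓ' ∧ i < i' < j < j')` or `(ℓ = ℓ' - 1 ∧ i' < i < j' < j)`. -/
def rPerp (n p : ℕ) (U : Set (Diag p)) : Set (Diag p) :=
  {u | IsDiagonal n p u ∧ ∀ v ∈ U, Crosses p v u →
    (v.2.2 = u.2.2 ∧ v.1 < u.1 ∧ u.1 < v.2.1 ∧ v.2.1 < u.2.1) ∨
    (u.2.2 = v.2.2 + 1 ∧ u.1 < v.1 ∧ v.1 < u.2.1 ∧ u.2.1 < v.2.1)}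

/-- The set `^⊥𝔘`: diagonals `u = (i',j',ℓ')` such that every `v = (i,j,ℓ) ∈ 𝔘` crossing `u`
satisfies `(ℓ = ℓ' ∧ i' < i < j' < j)` or `(ℓ = ℓ' + 1 ∧ i < i' < j < j')`. -/
def lPerp (n p : ℕ) (U : Set (Diag p)) : Set (Diag p) :=
  {u | IsDiagonal n p u ∧ ∀ v ∈ U, Crosses p v u →
    (v.2.2 = u.2.2 ∧ u.1 < v.1 ∧ v.1 < u.2.1 ∧ u.2.1 < v.2.1) ∨
    (v.2.2 = u.2.2 + 1 ∧ v.1 < u.1 ∧ u.1 < v.2.1 ∧ v.2.1 < u.2.1)}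

private lemma zmod_ne_add_one {p : ℕ} (hp : 2 ≤ p) (x : ZMod p) : x ≠ x + 1 := by
  haveI : Fact (1 < p) := ⟨hp⟩
  intro h
  exact one_ne_zero (left_eq_add.mp h)

/-- For every set `𝔘` of diagonals of `Π^p`, the set `^⊥𝔘` is a Ptolemy diagram. -/
theorem lPerp_isPtolemy (n p : ℕ) (hn : 1 ≤ n) (hp : 2 ≤ p)
    (U : Set (Diag p)) (hU : ∀ d ∈ U, IsDiagonal n p d) :
    IsPtolemy n p (lPerp n p U) := by
  have hne : ∀ x : ZMod p, x ≠ x + 1 := zmod_ne_add_one hp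
  have key : ∀ (c d : ℤ) (l : ZMod p), (c, d, l) ∈ lPerp n p U →
      ∀ (a b : ℤ) (m : ZMod p), (a, b, m) ∈ U → Crosses p (a, b, m) (c, d, l) →
      (m = l ∧ c < a ∧ a < d ∧ d < b) ∨ (m = l + 1 ∧ a < c ∧ c < b ∧ b < d) :=
    fun c d l h a b m hv hc => h.2 (a, b, m) hv hc
  have mk : ∀ (a b : ℤ) (m : ZMod p) (c d : ℤ) (l : ZMod p),
      ((m = l ∧ ((a < c ∧ c < b ∧ b < d) ∨ (c < a ∧ a < d ∧ d < b))) ∨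
       (l = m + 1 ∧ c < a ∧ a < d ∧ d < b) ∨
       (m = l + 1 ∧ a < c ∧ c < b ∧ b < d)) → Crosses p (a, b, m) (c, d, l) :=
    fun _ _ _ _ _ _ h => h
  have el : ∀ (a b : ℤ) (m : ZMod p) (c d : ℤ) (l : ZMod p),
      Crosses p (a, b, m) (c, d, l) →
      ((m = l ∧ ((a < c ∧ c < b ∧ b < d) ∨ (c < a ∧ a < d ∧ d < b))) ∨
       (l = m + 1 ∧ c < a ∧ a < d ∧ d < b) ∨
       (m = l + 1 ∧ a < c ∧ c < b ∧ b < d)) :=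
    fun _ _ _ _ _ _ h => h
  have mem_mk : ∀ (c d : ℤ) (l : ZMod p), IsDiagonal n p (c, d, l) →
      (∀ (a b : ℤ) (m : ZMod p), (a, b, m) ∈ U → Crosses p (a, b, m) (c, d, l) →
        (m = l ∧ c < a ∧ a < d ∧ d < b) ∨ (m = l + 1 ∧ a < c ∧ c < b ∧ b < d)) →
      (c, d, l) ∈ lPerp n p U :=
    fun c d l h1 h2 => ⟨h1, fun v hv hc => by
      obtain ⟨a, b, m⟩ := v; exact h2 a b m hv hc⟩
  rintro ⟨a1, b1, l1⟩ hX ⟨a2, b2, l2⟩ hY hcross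
  dsimp only
  refine ⟨?_, ?_, ?_⟩
  · -- (Pt1): l1 = l2
    rintro ⟨hl, ⟨h1, h2, h3⟩ | ⟨h1, h2, h3⟩⟩
    · -- a1 < a2 < b1 < b2
      constructor
      · -- Z1 = (a2, b1, l1)
        intro hd
        refine mem_mk _ _ _ hd ?_
        intro a b m hv hcv
        rcases el a b m _ _ _ hcv with
          ⟨hm, ⟨u1, u2, u3⟩ | ⟨u1, u2, u3⟩⟩ | ⟨hm, u1, u2, u3⟩ | ⟨hm, u1, u2, u3⟩
        · -- bad A: a < a2 < b < b1 ; use Y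
          rcases key a2 b2 l2 hY a b m hv
              (mk _ _ _ _ _ _ (Or.inl ⟨hm.trans hl, Or.inl ⟨u1, u2, by omega⟩⟩)) with
            ⟨e, f1, f2, f3⟩ | ⟨e, f1, f2, f3⟩
          · omega
          · exact absurd ((hm.trans hl).symm.trans e) (hne l2)
        · exact Or.inl ⟨hm, u1, u2, u3⟩
        · -- bad B: l1 = m + 1, a2 < a < b1 < b ; use X
          rcases key a1 b1 l1 hX a b m hv
              (mk _ _ _ _ _ _ (Or.inr (Or.inl ⟨hm, by omega, u2, u3⟩))) with
            ⟨e, f1, f2, f3⟩ | ⟨e, f1, f2, f3⟩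
          · rw [e] at hm; exact absurd hm (hne l1)
          · omega
        · exact Or.inr ⟨hm, u1, u2, u3⟩
      · -- Z2 = (a1, b2, l1)
        intro hd
        refine mem_mk _ _ _ hd ?_
        intro a b m hv hcv
        rcases el a b m _ _ _ hcv with
          ⟨hm, ⟨u1, u2, u3⟩ | ⟨u1, u2, u3⟩⟩ | ⟨hm, u1, u2, u3⟩ | ⟨hm, u1, u2, u3⟩
        · -- bad A: a < a1 < b < b2
          rcases lt_or_ge b b1 with hb | hb
          · rcases key a1 b1 l1 hX a b m hv
                (mk _ _ _ _ _ _ (Or.inl ⟨hm, Or.inl ⟨u1, u2, hb⟩⟩)) with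
              ⟨e, f1, f2, f3⟩ | ⟨e, f1, f2, f3⟩
            · omega
            · exact absurd (hm.symm.trans e) (hne l1)
          · rcases key a2 b2 l2 hY a b m hv
                (mk _ _ _ _ _ _ (Or.inl ⟨hm.trans hl, Or.inl ⟨by omega, by omega, u3⟩⟩)) with
              ⟨e, f1, f2, f3⟩ | ⟨e, f1, f2, f3⟩
            · omega
            · exact absurd ((hm.trans hl).symm.trans e) (hne l2)
        · exact Or.inl ⟨hm, u1, u2, u3⟩
        · -- bad B: l1 = m + 1, a1 < a < b2 < b
          rcases lt_or_ge a2 a with ha | ha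
          · rcases key a2 b2 l2 hY a b m hv
                (mk _ _ _ _ _ _ (Or.inr (Or.inl ⟨hl.symm.trans hm, ha, u2, u3⟩))) with
              ⟨e, f1, f2, f3⟩ | ⟨e, f1, f2, f3⟩
            · have := hl.symm.trans hm; rw [e] at this; exact absurd this (hne l2)
            · omega
          · rcases key a1 b1 l1 hX a b m hv
                (mk _ _ _ _ _ _ (Or.inr (Or.inl ⟨hm, u1, by omega, by omega⟩))) with
              ⟨e, f1, f2, f3⟩ | ⟨e, f1, f2, f3⟩
            · rw [e] at hm; exact absurd hm (hne l1)
            · omega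
        · exact Or.inr ⟨hm, u1, u2, u3⟩
    · -- a2 < a1 < b2 < b1
      constructor
      · -- Z1 = (a2, b1, l1)  (outer)
        intro hd
        refine mem_mk _ _ _ hd ?_
        intro a b m hv hcv
        rcases el a b m _ _ _ hcv with
          ⟨hm, ⟨u1, u2, u3⟩ | ⟨u1, u2, u3⟩⟩ | ⟨hm, u1, u2, u3⟩ | ⟨hm, u1, u2, u3⟩
        · -- bad A: a < a2 < b < b1
          rcases lt_or_ge b b2 with hb | hb
          · rcases key a2 b2 l2 hY a b m hv
                (mk _ _ _ _ _ _ (Or.inl ⟨hm.trans hl, Or.inl ⟨u1, u2, hb⟩⟩)) with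
              ⟨e, f1, f2, f3⟩ | ⟨e, f1, f2, f3⟩
            · omega
            · exact absurd ((hm.trans hl).symm.trans e) (hne l2)
          · rcases key a1 b1 l1 hX a b m hv
                (mk _ _ _ _ _ _ (Or.inl ⟨hm, Or.inl ⟨by omega, by omega, u3⟩⟩)) with
              ⟨e, f1, f2, f3⟩ | ⟨e, f1, f2, f3⟩
            · omega
            · exact absurd (hm.symm.trans e) (hne l1)
        · exact Or.inl ⟨hm, u1, u2, u3⟩
        · -- bad B: l1 = m + 1, a2 < a < b1 < b
          rcases lt_or_ge a1 a with ha | ha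
          · rcases key a1 b1 l1 hX a b m hv
                (mk _ _ _ _ _ _ (Or.inr (Or.inl ⟨hm, ha, u2, u3⟩))) with
              ⟨e, f1, f2, f3⟩ | ⟨e, f1, f2, f3⟩
            · rw [e] at hm; exact absurd hm (hne l1)
            · omega
          · rcases key a2 b2 l2 hY a b m hv
                (mk _ _ _ _ _ _ (Or.inr (Or.inl ⟨hl.symm.trans hm, u1, by omega, by omega⟩))) with
              ⟨e, f1, f2, f3⟩ | ⟨e, f1, f2, f3⟩
            · have := hl.symm.trans hm; rw [e] at this; exact absurd this (hne l2)
            · omega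
        · exact Or.inr ⟨hm, u1, u2, u3⟩
      · -- Z2 = (a1, b2, l1)  (inner)
        intro hd
        refine mem_mk _ _ _ hd ?_
        intro a b m hv hcv
        rcases el a b m _ _ _ hcv with
          ⟨hm, ⟨u1, u2, u3⟩ | ⟨u1, u2, u3⟩⟩ | ⟨hm, u1, u2, u3⟩ | ⟨hm, u1, u2, u3⟩
        · -- bad A: a < a1 < b < b2 ; use X
          rcases key a1 b1 l1 hX a b m hv
              (mk _ _ _ _ _ _ (Or.inl ⟨hm, Or.inl ⟨u1, u2, by omega⟩⟩)) with
            ⟨e, f1, f2, f3⟩ | ⟨e, f1, f2, f3⟩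
          · omega
          · exact absurd (hm.symm.trans e) (hne l1)
        · exact Or.inl ⟨hm, u1, u2, u3⟩
        · -- bad B: l1 = m + 1, a1 < a < b2 < b ; use Y
          rcases key a2 b2 l2 hY a b m hv
              (mk _ _ _ _ _ _ (Or.inr (Or.inl ⟨hl.symm.trans hm, by omega, u2, u3⟩))) with
            ⟨e, f1, f2, f3⟩ | ⟨e, f1, f2, f3⟩
          · have := hl.symm.trans hm; rw [e] at this; exact absurd this (hne l2)
          · omega
        · exact Or.inr ⟨hm, u1, u2, u3⟩
  · -- (Pt2): l2 = l1 + 1, a2 < a1 < b2 < b1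
    rintro ⟨hl, h1, h2, h3⟩
    constructor
    · -- Z1 = (a2, a1, l2)
      intro hd
      refine mem_mk _ _ _ hd ?_
      intro a b m hv hcv
      rcases el a b m _ _ _ hcv with
        ⟨hm, ⟨u1, u2, u3⟩ | ⟨u1, u2, u3⟩⟩ | ⟨hm, u1, u2, u3⟩ | ⟨hm, u1, u2, u3⟩
      · -- bad A: a < a2 < b < a1 ; use Y
        rcases key a2 b2 l2 hY a b m hv
            (mk _ _ _ _ _ _ (Or.inl ⟨hm, Or.inl ⟨u1, u2, by omega⟩⟩)) with
          ⟨e, f1, f2, f3⟩ | ⟨e, f1, f2, f3⟩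
        · omega
        · exact absurd (hm.symm.trans e) (hne l2)
      · exact Or.inl ⟨hm, u1, u2, u3⟩
      · -- bad B: l2 = m + 1, a2 < a < a1 < b
        have em : l1 = m := add_right_cancel (hl.symm.trans hm)
        rcases lt_or_ge b b1 with hb | hb
        · rcases key a1 b1 l1 hX a b m hv
              (mk _ _ _ _ _ _ (Or.inl ⟨em.symm, Or.inl ⟨u2, u3, hb⟩⟩)) with
            ⟨e, f1, f2, f3⟩ | ⟨e, f1, f2, f3⟩
          · omega
          · exact absurd (em.trans e) (hne l1)
        · rcases key a2 b2 l2 hY a b m hv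
              (mk _ _ _ _ _ _ (Or.inr (Or.inl ⟨hm, u1, by omega, by omega⟩))) with
            ⟨e, f1, f2, f3⟩ | ⟨e, f1, f2, f3⟩
          · rw [e] at hm; exact absurd hm (hne l2)
          · omega
      · exact Or.inr ⟨hm, u1, u2, u3⟩
    · -- Z2 = (b2, b1, l1)
      intro hd
      refine mem_mk _ _ _ hd ?_
      intro a b m hv hcv
      rcases el a b m _ _ _ hcv with
        ⟨hm, ⟨u1, u2, u3⟩ | ⟨u1, u2, u3⟩⟩ | ⟨hm, u1, u2, u3⟩ | ⟨hm, u1, u2, u3⟩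
      · -- bad A: a < b2 < b < b1
        rcases lt_or_ge a a1 with ha | ha
        · rcases key a1 b1 l1 hX a b m hv
              (mk _ _ _ _ _ _ (Or.inl ⟨hm, Or.inl ⟨ha, by omega, u3⟩⟩)) with
            ⟨e, f1, f2, f3⟩ | ⟨e, f1, f2, f3⟩
          · omega
          · exact absurd (hm.symm.trans e) (hne l1)
        · have hml : l2 = m + 1 := by rw [hl, hm]
          rcases key a2 b2 l2 hY a b m hv
              (mk _ _ _ _ _ _ (Or.inr (Or.inl ⟨hml, by omega, u1, u2⟩))) with
            ⟨e, f1, f2, f3⟩ | ⟨e, f1, f2, f3⟩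
          · rw [e] at hml; exact absurd hml (hne l2)
          · omega
      · exact Or.inl ⟨hm, u1, u2, u3⟩
      · -- bad B: l1 = m + 1, b2 < a < b1 < b ; use X
        rcases key a1 b1 l1 hX a b m hv
            (mk _ _ _ _ _ _ (Or.inr (Or.inl ⟨hm, by omega, u2, u3⟩))) with
          ⟨e, f1, f2, f3⟩ | ⟨e, f1, f2, f3⟩
        · rw [e] at hm; exact absurd hm (hne l1)
        · omega
      · exact Or.inr ⟨hm, u1, u2, u3⟩
  · -- (Pt3): l1 = l2 + 1, a1 < a2 < b1 < b2
    rintro ⟨hl, h1, h2, h3⟩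
    constructor
    · -- Z1 = (a1, a2, l1)
      intro hd
      refine mem_mk _ _ _ hd ?_
      intro a b m hv hcv
      rcases el a b m _ _ _ hcv with
        ⟨hm, ⟨u1, u2, u3⟩ | ⟨u1, u2, u3⟩⟩ | ⟨hm, u1, u2, u3⟩ | ⟨hm, u1, u2, u3⟩
      · -- bad A: a < a1 < b < a2 ; use X
        rcases key a1 b1 l1 hX a b m hv
            (mk _ _ _ _ _ _ (Or.inl ⟨hm, Or.inl ⟨u1, u2, by omega⟩⟩)) with
          ⟨e, f1, f2, f3⟩ | ⟨e, f1, f2, f3⟩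
        · omega
        · exact absurd (hm.symm.trans e) (hne l1)
      · exact Or.inl ⟨hm, u1, u2, u3⟩
      · -- bad B: l1 = m + 1, a1 < a < a2 < b
        have em : l2 = m := add_right_cancel (hl.symm.trans hm)
        rcases lt_or_ge b b2 with hb | hb
        · rcases key a2 b2 l2 hY a b m hv
              (mk _ _ _ _ _ _ (Or.inl ⟨em.symm, Or.inl ⟨u2, u3, hb⟩⟩)) with
            ⟨e, f1, f2, f3⟩ | ⟨e, f1, f2, f3⟩
          · omega
          · exact absurd (em.trans e) (hne l2)
        · rcases key a1 b1 l1 hX a b m hv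
              (mk _ _ _ _ _ _ (Or.inr (Or.inl ⟨hm, u1, by omega, by omega⟩))) with
            ⟨e, f1, f2, f3⟩ | ⟨e, f1, f2, f3⟩
          · rw [e] at hm; exact absurd hm (hne l1)
          · omega
      · exact Or.inr ⟨hm, u1, u2, u3⟩
    · -- Z2 = (b1, b2, l2)
      intro hd
      refine mem_mk _ _ _ hd ?_
      intro a b m hv hcv
      rcases el a b m _ _ _ hcv with
        ⟨hm, ⟨u1, u2, u3⟩ | ⟨u1, u2, u3⟩⟩ | ⟨hm, u1, u2, u3⟩ | ⟨hm, u1, u2, u3⟩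
      · -- bad A: a < b1 < b < b2
        rcases lt_or_ge a a2 with ha | ha
        · rcases key a2 b2 l2 hY a b m hv
              (mk _ _ _ _ _ _ (Or.inl ⟨hm, Or.inl ⟨ha, by omega, u3⟩⟩)) with
            ⟨e, f1, f2, f3⟩ | ⟨e, f1, f2, f3⟩
          · omega
          · exact absurd (hm.symm.trans e) (hne l2)
        · have hml : l1 = m + 1 := by rw [hl, hm]
          rcases key a1 b1 l1 hX a b m hv
              (mk _ _ _ _ _ _ (Or.inr (Or.inl ⟨hml, by omega, u1, u2⟩))) with
            ⟨e, f1, f2, f3⟩ | ⟨e, f1, f2, f3⟩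
          · rw [e] at hml; exact absurd hml (hne l1)
          · omega
      · exact Or.inl ⟨hm, u1, u2, u3⟩
      · -- bad B: l2 = m + 1, b1 < a < b2 < b ; use Y
        rcases key a2 b2 l2 hY a b m hv
            (mk _ _ _ _ _ _ (Or.inr (Or.inl ⟨hm, by omega, u2, u3⟩))) with
          ⟨e, f1, f2, f3⟩ | ⟨e, f1, f2, f3⟩
        · rw [e] at hm; exact absurd hm (hne l2)
        · omega
      · exact Or.inr ⟨hm, u1, u2, u3⟩
end

section
/- Let 𝔘 be a Ptolemy diagram in the repetitive polygon Π^p, let a be a vertex with a ≠ N and ℓ a region index, and suppose that 𝔘 contains a diagonal of the form (c',a,ℓ+1) with c' < a but contains no diagonal of the form (a,b',ℓ) with a < b'. Let c be the minimal integer with (c,a,ℓ+1) ∈ 𝔘. If (c,a+1) ≠ (1,N), then (c,a+1,ℓ) is a diagonal of Π^p lying in 𝔘^⊥. -/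
lemma isDiag_mk {n p : ℕ} {i j : ℤ} {k : ZMod p} :
    IsDiagonal n p (i, j, k) ↔
      (1 ≤ i ∧ i < j ∧ j ≤ (n : ℤ) + 3 ∧ 2 ≤ j - i ∧ ¬(i = 1 ∧ j = (n : ℤ) + 3)) :=
  Iff.rfl

lemma rPerp_mk {n p : ℕ} {U : Set (Diag p)} {i j : ℤ} {k : ZMod p} :
    (i, j, k) ∈ rPerp n p U ↔
      (IsDiagonal n p (i, j, k) ∧ ∀ v ∈ U, Crosses p v (i, j, k) →
        (v.2.2 = k ∧ v.1 < i ∧ i < v.2.1 ∧ v.2.1 < j) ∨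
        (k = v.2.2 + 1 ∧ i < v.1 ∧ v.1 < j ∧ j < v.2.1)) :=
  Iff.rfl

/-- Corollary 4.13: if `𝔘` is a Ptolemy diagram, `a ≠ N`, `c` is minimal with
`(c,a,ℓ+1) ∈ 𝔘` and `𝔘` contains no diagonal of the form `(a,b',ℓ)`, then `(c,a+1,ℓ)` is a
diagonal of `Π^p` lying in `𝔘^⊥`. -/
theorem mem_rPerp_of_min (n p : ℕ) (hn : 1 ≤ n) (hp : 2 ≤ p)
    (U : Set (Diag p)) (hU : ∀ d ∈ U, IsDiagonal n p d) (hPt : IsPtolemy n p U)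
    (a : ℤ) (ha : 1 ≤ a ∧ a ≤ (n : ℤ) + 3) (haN : a ≠ (n : ℤ) + 3) (ℓ : ZMod p)
    (c : ℤ)
    (hc : (c, a, ℓ + 1) ∈ U) (hcmin : ∀ c', (c', a, ℓ + 1) ∈ U → c ≤ c')
    (hnob : ∀ b', (a, b', ℓ) ∉ U)
    (hca : ¬(c = 1 ∧ a + 1 = (n : ℤ) + 3)) :
    (c, a + 1, ℓ) ∈ rPerp n p U := by
  have hd := isDiag_mk.mp (hU _ hc)
  rw [rPerp_mk]
  refine ⟨isDiag_mk.mpr (by omega), ?_⟩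
  rintro ⟨i, j, m⟩ hv hcr
  have hvd := isDiag_mk.mp (hU _ hv)
  replace hcr : (m = ℓ ∧ ((i < c ∧ c < j ∧ j < a + 1) ∨ (c < i ∧ i < a + 1 ∧ a + 1 < j))) ∨
      (ℓ = m + 1 ∧ c < i ∧ i < a + 1 ∧ a + 1 < j) ∨
      (m = ℓ + 1 ∧ i < c ∧ c < j ∧ j < a + 1) := hcr
  show (m = ℓ ∧ i < c ∧ c < j ∧ j < a + 1) ∨ (ℓ = m + 1 ∧ c < i ∧ i < a + 1 ∧ a + 1 < j)
  rcases hcr with ⟨hm, hA | hB⟩ | ⟨hm, h1, h2, h3⟩ | ⟨hm, h1, h2, h3⟩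
  · exact Or.inl ⟨hm, hA⟩
  · exfalso
    obtain ⟨h1, h2, h3⟩ := hB
    subst hm
    rcases eq_or_lt_of_le (show i ≤ a by omega) with hia | hia
    · subst hia; exact hnob j hv
    · have hcr2 : Crosses p (i, j, m) (c, a, m + 1) :=
        Or.inr (Or.inl ⟨rfl, h1, hia, show a < j by omega⟩)
      have hmem : IsDiagonal n p (a, j, m) → (a, j, m) ∈ U :=
        ((hPt _ hv _ hc hcr2).2.1 ⟨rfl, h1, hia, show a < j by omega⟩).2
      exact hnob j (hmem (isDiag_mk.mpr (by omega)))
  · exact Or.inr ⟨hm, h1, h2, h3⟩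
  · exfalso
    subst hm
    rcases eq_or_lt_of_le (show j ≤ a by omega) with hja | hja
    · subst hja; exact absurd (hcmin i hv) (by omega)
    · have hcr2 : Crosses p (c, a, ℓ + 1) (i, j, ℓ + 1) :=
        Or.inl ⟨rfl, Or.inr ⟨h1, h2, hja⟩⟩
      have hmem : IsDiagonal n p (i, a, ℓ + 1) → (i, a, ℓ + 1) ∈ U :=
        ((hPt _ hc _ hv hcr2).1 ⟨rfl, Or.inr ⟨h1, h2, hja⟩⟩).1
      have := hcmin i (hmem (isDiag_mk.mpr (by omega)))
      omega
end

section
/- Let 𝔘 be a Ptolemy diagram in the repetitive polygon Π^p and let (i,j,ℓ) be a diagonal lying in ^⊥(𝔘^⊥) with i ≠ 1. Then there exist integers b and c with (i,b,ℓ) ∈ 𝔘, b ≥ j, and (i,c,ℓ) ∈ 𝔘, c ≤ j. -/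
private lemma crosses_iff (p : ℕ) (a b : ℤ) (r : ZMod p) (c d : ℤ) (s : ZMod p) :
    Crosses p (a, b, r) (c, d, s) ↔
      (r = s ∧ ((a < c ∧ c < b ∧ b < d) ∨ (c < a ∧ a < d ∧ d < b))) ∨
      (s = r + 1 ∧ c < a ∧ a < d ∧ d < b) ∨
      (r = s + 1 ∧ a < c ∧ c < b ∧ b < d) := Iff.rfl

private lemma isPtolemy_elim {n p : ℕ} {U : Set (Diag p)} (hPt : IsPtolemy n p U)
    {a b : ℤ} {r : ZMod p} {c d : ℤ} {s : ZMod p}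
    (hX : (a, b, r) ∈ U) (hY : (c, d, s) ∈ U) (hc : Crosses p (a, b, r) (c, d, s)) :
    ((r = s ∧ ((a < c ∧ c < b ∧ b < d) ∨ (c < a ∧ a < d ∧ d < b))) →
      (IsDiagonal n p (c, b, r) → (c, b, r) ∈ U) ∧
      (IsDiagonal n p (a, d, r) → (a, d, r) ∈ U)) ∧
    ((s = r + 1 ∧ c < a ∧ a < d ∧ d < b) →
      (IsDiagonal n p (c, a, s) → (c, a, s) ∈ U) ∧
      (IsDiagonal n p (d, b, r) → (d, b, r) ∈ U)) ∧
    ((r = s + 1 ∧ a < c ∧ c < b ∧ b < d) →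
      (IsDiagonal n p (a, c, r) → (a, c, r) ∈ U) ∧
      (IsDiagonal n p (b, d, s) → (b, d, s) ∈ U)) :=
  hPt (a, b, r) hX (c, d, s) hY hc

/-- If `𝔘` is a Ptolemy diagram, `(i,j,ℓ) ∈ ^⊥(𝔘^⊥)` and `i ≠ 1`, then there are
`(i,b,ℓ) ∈ 𝔘` with `b ≥ j` and `(i,c,ℓ) ∈ 𝔘` with `c ≤ j`. -/
theorem exists_ge_and_le (n p : ℕ) (hn : 1 ≤ n) (hp : 2 ≤ p)
    (U : Set (Diag p)) (hU : ∀ d ∈ U, IsDiagonal n p d) (hPt : IsPtolemy n p U)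
    (i j : ℤ) (ℓ : ZMod p)
    (h : (i, j, ℓ) ∈ lPerp n p (rPerp n p U)) (hi : i ≠ 1) :
    (∃ b, (i, b, ℓ) ∈ U ∧ j ≤ b) ∧ (∃ c, (i, c, ℓ) ∈ U ∧ c ≤ j) := by
  have hone : (1 : ZMod p) ≠ 0 := by
    haveI : Fact (1 < p) := ⟨by omega⟩
    exact one_ne_zero
  obtain ⟨hd, hperp⟩ := h
  have hi1 : (1:ℤ) ≤ i := hd.1
  have hij : i < j := hd.2.1
  have hjN : j ≤ (n:ℤ) + 3 := hd.2.2.1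
  have hji2 : 2 ≤ j - i := hd.2.2.2.1
  have hi2 : (2 : ℤ) ≤ i := by omega
  -- Part 1
  have part1 : ∃ b, (i, b, ℓ) ∈ U ∧ j ≤ b := by
    by_contra hcon
    push_neg at hcon
    obtain ⟨m, hmS, hmax⟩ := Int.exists_greatest_of_bdd
      (P := fun t => t = i + 1 ∨ (i, t, ℓ) ∈ U)
      ⟨j - 1, by
        rintro z (rfl | hz)
        · omega
        · have := hcon z hz; omega⟩
      ⟨i + 1, Or.inl rfl⟩
    have hm1 : i + 1 ≤ m := hmax (i + 1) (Or.inl rfl)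
    have hm2 : m ≤ j - 1 := by
      rcases hmS with rfl | hz
      · omega
      · have := hcon m hz; omega
    obtain ⟨A, hAS, hmin⟩ := Int.exists_least_of_bdd
      (P := fun t => t = i - 1 ∨ (t, i, ℓ + 1) ∈ U)
      ⟨1, by
        rintro z (rfl | hz)
        · omega
        · exact (hU _ hz).1⟩
      ⟨i - 1, Or.inl rfl⟩
    have hA1 : A ≤ i - 1 := hmin (i - 1) (Or.inl rfl)
    have hA2 : (1 : ℤ) ≤ A := by
      rcases hAS with rfl | hz
      · omega
      · exact (hU _ hz).1
    have hvd : IsDiagonal n p (A, m, ℓ) :=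
      ⟨show (1:ℤ) ≤ A by omega, show A < m by omega, show m ≤ (n:ℤ) + 3 by omega,
        show 2 ≤ m - A by omega, show ¬(A = 1 ∧ m = (n:ℤ) + 3) by omega⟩
    have hvn : (A, m, ℓ) ∉ rPerp n p U := by
      intro hv
      have hc : Crosses p (A, m, ℓ) (i, j, ℓ) :=
        Or.inl ⟨rfl, Or.inl ⟨show A < i by omega, show i < m by omega, show m < j by omega⟩⟩
      rcases hperp _ hv hc with ⟨_, hlt, _⟩ | ⟨hr, _⟩
      · have : i < A := hlt
        omega
      · exact hone (left_eq_add.mp hr)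
    have hex : ∃ w, w ∈ U ∧ Crosses p w (A, m, ℓ) ∧
        ¬((w.2.2 = ℓ ∧ w.1 < A ∧ A < w.2.1 ∧ w.2.1 < m) ∨
          (ℓ = w.2.2 + 1 ∧ A < w.1 ∧ w.1 < m ∧ m < w.2.1)) := by
      by_contra hall
      push_neg at hall
      exact hvn ⟨hvd, fun v hv hc => hall v hv hc⟩
    obtain ⟨⟨a, b, r⟩, hwU, hwc, hwna⟩ := hex
    have ha1 : (1 : ℤ) ≤ a := (hU _ hwU).1
    have hab : a < b := (hU _ hwU).2.1
    have hbN : b ≤ (n : ℤ) + 3 := (hU _ hwU).2.2.1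
    rw [crosses_iff] at hwc
    rcases hwc with ⟨hr, ⟨h1, h2, h3⟩ | ⟨h1, h2, h3⟩⟩ | ⟨hr, h1, h2, h3⟩ | ⟨hr, h1, h2, h3⟩
    · exact hwna (Or.inl ⟨hr, h1, h2, h3⟩)
    · -- r = ℓ, A < a, a < m, m < b
      rw [hr] at hwU
      rcases lt_trichotomy a i with hai | rfl | hai
      · -- a < i : use (A, i, ℓ+1) ∈ U
        have hXU : (A, i, ℓ + 1) ∈ U := by
          rcases hAS with h' | h'
          · omega
          · exact h'
        have hcr : Crosses p (A, i, ℓ + 1) (a, b, ℓ) :=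
          (crosses_iff p A i (ℓ + 1) a b ℓ).mpr
            (Or.inr (Or.inr ⟨rfl, h1, hai, by omega⟩))
        have hbU : (i, b, ℓ) ∈ U :=
          ((isPtolemy_elim hPt hXU hwU hcr).2.2 ⟨rfl, h1, hai, by omega⟩).2
            ⟨show (1:ℤ) ≤ i by omega, show i < b by omega, show b ≤ (n:ℤ) + 3 by omega,
              show 2 ≤ b - i by omega, show ¬(i = 1 ∧ b = (n:ℤ) + 3) by omega⟩
        have := hmax b (Or.inr hbU); omega
      · have := hmax b (Or.inr hwU); omega
      · -- i < a : use (i, m, ℓ) ∈ U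
        have hXU : (i, m, ℓ) ∈ U := by
          rcases hmS with h' | h'
          · omega
          · exact h'
        have hcr : Crosses p (i, m, ℓ) (a, b, ℓ) :=
          (crosses_iff p i m ℓ a b ℓ).mpr (Or.inl ⟨rfl, Or.inl ⟨hai, h2, h3⟩⟩)
        have hbU : (i, b, ℓ) ∈ U :=
          ((isPtolemy_elim hPt hXU hwU hcr).1 ⟨rfl, Or.inl ⟨hai, h2, h3⟩⟩).2
            ⟨show (1:ℤ) ≤ i by omega, show i < b by omega, show b ≤ (n:ℤ) + 3 by omega,
              show 2 ≤ b - i by omega, show ¬(i = 1 ∧ b = (n:ℤ) + 3) by omega⟩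
        have := hmax b (Or.inr hbU); omega
    · -- ℓ = r + 1, A < a, a < m, m < b : allowed
      exact hwna (Or.inr ⟨hr, h1, h2, h3⟩)
    · -- r = ℓ + 1, a < A, A < b, b < m
      rw [hr] at hwU
      rcases lt_trichotomy b i with hbi | rfl | hbi
      · -- b < i : use (A, i, ℓ+1) ∈ U, Pt1
        have hXU : (A, i, ℓ + 1) ∈ U := by
          rcases hAS with h' | h'
          · omega
          · exact h'
        have hcr : Crosses p (a, b, ℓ + 1) (A, i, ℓ + 1) :=
          (crosses_iff p a b (ℓ + 1) A i (ℓ + 1)).mpr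
            (Or.inl ⟨rfl, Or.inl ⟨h1, h2, hbi⟩⟩)
        have haU : (a, i, ℓ + 1) ∈ U :=
          ((isPtolemy_elim hPt hwU hXU hcr).1 ⟨rfl, Or.inl ⟨h1, h2, hbi⟩⟩).2
            ⟨show (1:ℤ) ≤ a by omega, show a < i by omega, show i ≤ (n:ℤ) + 3 by omega,
              show 2 ≤ i - a by omega, show ¬(a = 1 ∧ i = (n:ℤ) + 3) by omega⟩
        have := hmin a (Or.inr haU); omega
      · have := hmin a (Or.inr hwU); omega
      · -- i < b : use (i, m, ℓ) ∈ U, Pt3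
        have hXU : (i, m, ℓ) ∈ U := by
          rcases hmS with h' | h'
          · omega
          · exact h'
        have hcr : Crosses p (a, b, ℓ + 1) (i, m, ℓ) :=
          (crosses_iff p a b (ℓ + 1) i m ℓ).mpr
            (Or.inr (Or.inr ⟨rfl, by omega, hbi, h3⟩))
        have haU : (a, i, ℓ + 1) ∈ U :=
          ((isPtolemy_elim hPt hwU hXU hcr).2.2 ⟨rfl, by omega, hbi, h3⟩).1
            ⟨show (1:ℤ) ≤ a by omega, show a < i by omega, show i ≤ (n:ℤ) + 3 by omega,
              show 2 ≤ i - a by omega, show ¬(a = 1 ∧ i = (n:ℤ) + 3) by omega⟩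
        have := hmin a (Or.inr haU); omega
  refine ⟨part1, ?_⟩
  -- Part 2
  by_contra hcon
  push_neg at hcon
  obtain ⟨b₀, hb₀U, hb₀⟩ := part1
  obtain ⟨y, hyU, hymin⟩ := Int.exists_least_of_bdd
    (P := fun t => (i, t, ℓ) ∈ U)
    ⟨j + 1, fun z hz => by have := hcon z hz; omega⟩
    ⟨b₀, hb₀U⟩
  have hyj : j + 1 ≤ y := by have := hcon y hyU; omega
  have hyN : y ≤ (n : ℤ) + 3 := (hU _ hyU).2.2.1
  have hvd : IsDiagonal n p (i + 1, y, ℓ - 1) :=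
    ⟨show (1:ℤ) ≤ i + 1 by omega, show i + 1 < y by omega, show y ≤ (n:ℤ) + 3 by omega,
      show 2 ≤ y - (i + 1) by omega, show ¬(i + 1 = 1 ∧ y = (n:ℤ) + 3) by omega⟩
  have hvn : (i + 1, y, ℓ - 1) ∉ rPerp n p U := by
    intro hv
    have hc : Crosses p (i + 1, y, ℓ - 1) (i, j, ℓ) :=
      Or.inr (Or.inl ⟨(sub_add_cancel ℓ 1).symm,
        show i < i + 1 by omega, show i + 1 < j by omega, show j < y by omega⟩)
    rcases hperp _ hv hc with ⟨hr, _⟩ | ⟨_, hlt, _⟩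
    · exact hone (sub_eq_self.mp hr)
    · have : i + 1 < i := hlt
      omega
  have hex : ∃ w, w ∈ U ∧ Crosses p w (i + 1, y, ℓ - 1) ∧
      ¬((w.2.2 = ℓ - 1 ∧ w.1 < i + 1 ∧ i + 1 < w.2.1 ∧ w.2.1 < y) ∨
        (ℓ - 1 = w.2.2 + 1 ∧ i + 1 < w.1 ∧ w.1 < y ∧ y < w.2.1)) := by
    by_contra hall
    push_neg at hall
    exact hvn ⟨hvd, fun v hv hc => hall v hv hc⟩
  obtain ⟨⟨a, b, r⟩, hwU, hwc, hwna⟩ := hex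
  have ha1 : (1 : ℤ) ≤ a := (hU _ hwU).1
  have hab : a < b := (hU _ hwU).2.1
  have hbN : b ≤ (n : ℤ) + 3 := (hU _ hwU).2.2.1
  rw [crosses_iff] at hwc
  rcases hwc with ⟨hr, ⟨h1, h2, h3⟩ | ⟨h1, h2, h3⟩⟩ | ⟨hr, h1, h2, h3⟩ | ⟨hr, h1, h2, h3⟩
  · exact hwna (Or.inl ⟨hr, h1, h2, h3⟩)
  · -- r = ℓ - 1, i + 1 < a, a < y, y < b
    rw [hr] at hwU
    have hcr : Crosses p (i, y, ℓ) (a, b, ℓ - 1) :=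
      (crosses_iff p i y ℓ a b (ℓ - 1)).mpr
        (Or.inr (Or.inr ⟨(sub_add_cancel ℓ 1).symm, by omega, h2, h3⟩))
    have haU : (i, a, ℓ) ∈ U :=
      ((isPtolemy_elim hPt hyU hwU hcr).2.2 ⟨(sub_add_cancel ℓ 1).symm, by omega, h2, h3⟩).1
        ⟨show (1:ℤ) ≤ i by omega, show i < a by omega, show a ≤ (n:ℤ) + 3 by omega,
          show 2 ≤ a - i by omega, show ¬(i = 1 ∧ a = (n:ℤ) + 3) by omega⟩
    have := hymin a haU; omega
  · -- ℓ - 1 = r + 1 : allowed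
    exact hwna (Or.inr ⟨hr, h1, h2, h3⟩)
  · -- r = ℓ - 1 + 1 = ℓ, a < i + 1, i + 1 < b, b < y
    have hr' : r = ℓ := by rwa [sub_add_cancel] at hr
    rw [hr'] at hwU
    rcases eq_or_lt_of_le (show a ≤ i by omega) with rfl | hai
    · have := hymin b hwU; omega
    · have hcr : Crosses p (i, y, ℓ) (a, b, ℓ) :=
        (crosses_iff p i y ℓ a b ℓ).mpr
          (Or.inl ⟨rfl, Or.inr ⟨hai, by omega, h3⟩⟩)
      have hbU : (i, b, ℓ) ∈ U :=
        ((isPtolemy_elim hPt hyU hwU hcr).1 ⟨rfl, Or.inr ⟨hai, by omega, h3⟩⟩).2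
          ⟨show (1:ℤ) ≤ i by omega, show i < b by omega, show b ≤ (n:ℤ) + 3 by omega,
            show 2 ≤ b - i by omega, show ¬(i = 1 ∧ b = (n:ℤ) + 3) by omega⟩
      have := hymin b hbU; omega
end
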